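/- Let n be even and F : F_2^n → F_2^n be a quadratic APN function with the subspaces V_b defined via the difference functions as above. Then for every nonzero b and every c ∈ F_2^n, the square of the Walsh transform satisfies (W_F(b,c))^2 ∈ {0, 2^n · |V_b|}. In particular, the amplitude of the component function F_b equals 2^{(n + dim V_b)/2}. -/

import Mathlib

open Finset

/-- `Vec n` is the vector space `F_2^n`. -/
abbrev Vec (n : ℕ) := Fin n → ZMod 2

/-- The standard dot product on `F_2^n`. -/
def dotp {n : ℕ} (a b : Vec n) : ZMod 2 := ∑ i, a i * b i

/-- The difference (derivative) function `D_{F,a}(x) = F(x) + F(x+a)`. -/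
def Dder {n : ℕ} (F : Vec n → Vec n) (a x : Vec n) : Vec n := F x + F (x + a)

/-- The linear hyperplane `H_b = {x : ⟨b,x⟩ = 0}`. -/
def Hyp {n : ℕ} (b : Vec n) : Set (Vec n) := {x | dotp b x = 0}

/-- The affine hyperplane `H̄_b = {x : ⟨b,x⟩ = 1}`. -/
def HypBar {n : ℕ} (b : Vec n) : Set (Vec n) := {x | dotp b x = 1}

/-- `T_b = {a : image(D_{F,a}) = H_b} ∪ {0}`. -/
def Tset {n : ℕ} (F : Vec n → Vec n) (b : Vec n) : Set (Vec n) :=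
  {a | Set.range (Dder F a) = Hyp b} ∪ {0}

/-- `T̄_b = {a : image(D_{F,a}) = H̄_b}`. -/
def TsetBar {n : ℕ} (F : Vec n → Vec n) (b : Vec n) : Set (Vec n) :=
  {a | Set.range (Dder F a) = HypBar b}

/-- `V_b = T_b ∪ T̄_b`. -/
def Vset {n : ℕ} (F : Vec n → Vec n) (b : Vec n) : Set (Vec n) := Tset F b ∪ TsetBar F b

/-- `F` is quadratic: all second derivatives are constant (algebraic degree ≤ 2). -/
def IsQuadratic {n m : ℕ} (F : Vec n → Vec m) : Prop :=
  ∀ a₁ a₂ : Vec n, ∃ c : Vec m, ∀ x, F (x + a₁ + a₂) + F (x + a₁) + F (x + a₂) + F x = c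

/-- `F` is APN: every equation `F(x) + F(x+a) = b`, `a ≠ 0`, has at most 2 solutions. -/
def IsAPN {n : ℕ} (F : Vec n → Vec n) : Prop :=
  ∀ a : Vec n, a ≠ 0 → ∀ b : Vec n, Nat.card {x : Vec n // F x + F (x + a) = b} ≤ 2

/-- The Walsh transform `W_F(b,a) = Σ_x (-1)^{⟨b,F(x)⟩ + ⟨a,x⟩}`. -/
def Walsh {n m : ℕ} (F : Vec n → Vec m) (b : Vec m) (a : Vec n) : ℤ :=
  ∑ x : Vec n, (-1 : ℤ) ^ ((dotp b (F x) + dotp a x).val)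

/-- The component `F_b` is bent: `|W_F(b,a)| = 2^{n/2}` for all `a`. -/
def IsBent {n m : ℕ} (F : Vec n → Vec m) (b : Vec m) : Prop :=
  ∀ a : Vec n, (Walsh F b a) ^ 2 = 2 ^ n

/-- The set `N_F` of non-trivial non-bent components of `F`. -/
def NF {n m : ℕ} (F : Vec n → Vec m) : Set (Vec m) := {b | b ≠ 0 ∧ ¬ IsBent F b}

/-- A vector space partition of `F_q^n`: a collection of nonzero subspaces such that
every nonzero vector lies in exactly one member. -/
def IsVSP {K : Type} [Field K] {n : ℕ} (𝒱 : Finset (Submodule K (Fin n → K))) : Prop :=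
  (∀ S ∈ 𝒱, S ≠ ⊥) ∧
  ∀ x : Fin n → K, x ≠ 0 → ∃! S : Submodule K (Fin n → K), S ∈ 𝒱 ∧ x ∈ S

/-- A blocking set of `PG(m,2)` (identified with `F_2^{m+1} \ {0}`) with respect to
`k`-spaces (nonzero parts of `(k+1)`-dimensional subspaces). -/
def PGBlocking (m k : ℕ) (B : Set (Fin (m + 1) → ZMod 2)) : Prop :=
  0 ∉ B ∧ ∀ S : Submodule (ZMod 2) (Fin (m + 1) → ZMod 2),
    Module.finrank (ZMod 2) S = k + 1 → ∃ x ∈ B, x ∈ S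

/-- `F_b` has amplitude `2^{(n+k)/2}`. -/
def HasAmp {n m : ℕ} (F : Vec n → Vec m) (b : Vec m) (k : ℕ) : Prop :=
  (∀ a, (Walsh F b a) ^ 2 = 0 ∨ (Walsh F b a) ^ 2 = 2 ^ (n + k)) ∧
  ∃ a, (Walsh F b a) ^ 2 = 2 ^ (n + k)

/-!
Write `f = ⟨b, F ·⟩` and `B(x, a) = f (x + a) + f x + f a + f 0`. Squaring the Walsh sum and
substituting `y = x + a` gives `W(b, c)² = Σ_a (-1)^(f a + f 0 + ⟨c, a⟩) Σ_x (-1)^B(x, a)`. For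
quadratic `F` the form `B` is additive in `x`, so the inner sum is `2ⁿ` on the radical `S` of `B`
and `0` off it. On `S` the map `a ↦ f a + f 0 + ⟨c, a⟩` is additive, so what remains is `|S|` or
`0`; summing over `c` shows that it is `|S|` for some `c`.

For APN `F` and `b ≠ 0`, a nonzero `a ∈ S` makes `⟨b, D_a F⟩` constant, so the image of `D_a F`
lies in one coset of the hyperplane `b^⊥`; it has at least `2ⁿ⁻¹` elements (fibres have size at
most 2), hence it is that coset. So `S = V_b`.
-/

theorem zmod_two_eq_zero_or_one (u : ZMod 2) : u = 0 ∨ u = 1 := by decide +revert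

theorem neg_one_pow_val_add (u v : ZMod 2) :
    (-1 : ℤ) ^ (u + v).val = (-1) ^ u.val * (-1) ^ v.val := by
  decide +revert

theorem sum_neg_one_pow_val {G : Type*} [AddGroup G] [Fintype G] (g : G →+ ZMod 2)
    [Decidable (g = 0)] :
    ∑ x, (-1 : ℤ) ^ (g x).val = if g = 0 then (Fintype.card G : ℤ) else 0 := by
  let χ := AddChar.zmodChar 2 (neg_one_sq (R := ℤ))
  have hχ : Function.Injective χ := by decide
  have hzero : χ.compAddMonoidHom (0 : G →+ ZMod 2) = 0 := by ext; simp [χ]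
  have key : χ.compAddMonoidHom g = 0 ↔ g = 0 := by
    rw [← hzero]; exact (AddChar.compAddMonoidHom_injective_right χ hχ).eq_iff
  classical
  have h := (χ.compAddMonoidHom g).sum_eq_ite
  simp only [key] at h
  exact h

section LinearSpace

variable {V : Type*} [AddCommGroup V]

def polar (f : V → ZMod 2) (x a : V) : ZMod 2 := f (x + a) + f x + f a + f 0

theorem polar_zero_right (f : V → ZMod 2) (x : V) : polar f x 0 = 0 := by
  simp only [polar, add_zero]; grind

variable [Module (ZMod 2) V]

/-- The linear structures of `f`: the directions `a` along which the derivative of `f` is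
constant. -/
def linSpace (f : V → ZMod 2) : Submodule (ZMod 2) V where
  carrier := {a | ∀ x, polar f x a = 0}
  zero_mem' := polar_zero_right f
  add_mem' {a a'} ha ha' x := by
    have h₁ := ha x
    have h₂ := ha' (x + a)
    have h₃ := ha' a
    simp only [polar] at *
    rw [← add_assoc]
    grind
  smul_mem' c a ha := by
    rcases zmod_two_eq_zero_or_one c with rfl | rfl
    · simpa using polar_zero_right f
    · simpa using ha

instance [Fintype V] (f : V → ZMod 2) : DecidablePred (· ∈ linSpace f) :=
  fun a => decidable_of_iff (∀ x, polar f x a = 0) Iff.rfl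

def linSpaceForm (f : V → ZMod 2) : linSpace f →+ ZMod 2 :=
  AddMonoidHom.mk' (fun a => f a + f 0) fun a a' => by
    have h := a'.2 a
    simp only [polar, Submodule.coe_add] at h ⊢
    grind

theorem sum_linSpace_eq_zero_or [Fintype V] (f : V → ZMod 2) (l : V →+ ZMod 2) :
    ∑ a : linSpace f, (-1 : ℤ) ^ (linSpaceForm f a + l a).val = 0 ∨
      ∑ a : linSpace f, (-1 : ℤ) ^ (linSpaceForm f a + l a).val = Nat.card (linSpace f) := by
  classical
  have h := sum_neg_one_pow_val (linSpaceForm f + l.comp (linSpace f).subtype.toAddMonoidHom)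
  rw [Nat.card_eq_fintype_card]
  split_ifs at h
  · exact Or.inr h
  · exact Or.inl h

end LinearSpace

section Walsh

variable {n m : ℕ}

theorem card_vec : Fintype.card (Vec n) = 2 ^ n := by simp

theorem dotp_add_right (c x y : Vec n) : dotp c (x + y) = dotp c x + dotp c y :=
  dotProduct_add c x y

theorem dotp_add_left (c c' x : Vec n) : dotp (c + c') x = dotp c x + dotp c' x :=
  add_dotProduct c c' x

theorem sum_neg_one_pow_dotp (a : Vec n) :
    ∑ c : Vec n, (-1 : ℤ) ^ (dotp c a).val = if a = 0 then 2 ^ n else 0 := by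
  classical
  let g : Vec n →+ ZMod 2 := AddMonoidHom.mk' (dotp · a) fun c c' => dotp_add_left c c' a
  have hg : g = 0 ↔ a = 0 := by
    rw [DFunLike.ext_iff, ← dotProduct_eq_zero_iff]
    exact forall_congr' fun c => by rw [dotProduct_comm]; rfl
  have h := sum_neg_one_pow_val g
  simp only [hg, card_vec] at h
  exact_mod_cast h

theorem exists_sum_linSpace_ne_zero (f : Vec n → ZMod 2) :
    ∃ c : Vec n, ∑ a : linSpace f, (-1 : ℤ) ^ (linSpaceForm f a + dotp c a).val ≠ 0 := by
  by_contra! h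
  have hsum : ∑ c : Vec n, ∑ a : linSpace f, (-1 : ℤ) ^ (linSpaceForm f a + dotp c a).val
      = 2 ^ n := by
    calc _ = ∑ a : linSpace f,
          (-1 : ℤ) ^ (linSpaceForm f a).val * ∑ c : Vec n, (-1) ^ (dotp c a).val := by
          rw [Finset.sum_comm]
          simp only [neg_one_pow_val_add, Finset.mul_sum]
      _ = 2 ^ n := by
          simp only [sum_neg_one_pow_dotp, ZeroMemClass.coe_eq_zero, mul_ite, mul_zero,
            Finset.sum_ite_eq', Finset.mem_univ, if_true, map_zero, ZMod.val_zero, pow_zero,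
            one_mul]
  simp only [h, Finset.sum_const_zero] at hsum
  exact absurd hsum.symm (by positivity)

theorem IsQuadratic.polar_add_left {F : Vec n → Vec m} (hq : IsQuadratic F) (b : Vec m)
    (x y a : Vec n) :
    polar (fun x => dotp b (F x)) (x + y) a =
      polar (fun x => dotp b (F x)) x a + polar (fun x => dotp b (F x)) y a := by
  obtain ⟨k, hk⟩ := hq a y
  have hx := congrArg (dotp b) (hk x)
  have h0 := congrArg (dotp b) (hk 0)
  simp only [dotp_add_right, zero_add] at hx h0
  simp only [polar]
  rw [add_right_comm x a y, add_comm a y] at *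
  grind

theorem IsQuadratic.sum_neg_one_pow_polar {F : Vec n → Vec m} (hq : IsQuadratic F) (b : Vec m)
    (a : Vec n) :
    ∑ x, (-1 : ℤ) ^ (polar (fun x => dotp b (F x)) x a).val =
      if a ∈ linSpace (fun x => dotp b (F x)) then 2 ^ n else 0 := by
  classical
  let g : Vec n →+ ZMod 2 :=
    AddMonoidHom.mk' (polar (fun x => dotp b (F x)) · a) fun x y => hq.polar_add_left b x y a
  have hg : g = 0 ↔ a ∈ linSpace (fun x => dotp b (F x)) := DFunLike.ext_iff
  have h := sum_neg_one_pow_val g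
  simp only [hg, card_vec] at h
  exact_mod_cast h

theorem IsQuadratic.walsh_sq_eq {F : Vec n → Vec m} (hq : IsQuadratic F) (b : Vec m)
    (c : Vec n) :
    Walsh F b c ^ 2 = 2 ^ n * ∑ a : linSpace (fun x => dotp b (F x)),
      (-1 : ℤ) ^ (linSpaceForm (fun x => dotp b (F x)) a + dotp c a).val := by
  classical
  set f : Vec n → ZMod 2 := fun x => dotp b (F x)
  calc Walsh F b c ^ 2
      = ∑ x, ∑ a, (-1 : ℤ) ^ (f x + dotp c x).val * (-1) ^ (f (x + a) + dotp c (x + a)).val := by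
        rw [sq, Walsh, Finset.sum_mul_sum]
        exact Finset.sum_congr rfl fun x _ =>
          (Fintype.sum_equiv (Equiv.addLeft x) _ _ fun _ => rfl).symm
    _ = ∑ a, ∑ x, (-1 : ℤ) ^ (f x + dotp c x).val * (-1) ^ (f (x + a) + dotp c (x + a)).val :=
        Finset.sum_comm
    _ = ∑ a, (-1 : ℤ) ^ (f a + f 0 + dotp c a).val * ∑ x, (-1) ^ (polar f x a).val := by
        refine Finset.sum_congr rfl fun a _ => ?_
        rw [Finset.mul_sum]
        refine Finset.sum_congr rfl fun x _ => ?_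
        rw [← neg_one_pow_val_add, ← neg_one_pow_val_add, dotp_add_right]
        congr 2
        simp only [polar]
        grind
    _ = ∑ a ∈ univ.filter (· ∈ linSpace f), 2 ^ n * (-1 : ℤ) ^ (f a + f 0 + dotp c a).val := by
        rw [Finset.sum_filter]
        refine Finset.sum_congr rfl fun a _ => ?_
        rw [hq.sum_neg_one_pow_polar, mul_ite, mul_zero, mul_comm]
    _ = _ := by
        rw [Finset.sum_subtype (p := (· ∈ linSpace f)) _ (fun a => by simp), Finset.mul_sum]
        rfl

theorem IsQuadratic.walsh_sq_eq_zero_or {F : Vec n → Vec m} (hq : IsQuadratic F) (b : Vec m)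
    (c : Vec n) :
    Walsh F b c ^ 2 = 0 ∨
      Walsh F b c ^ 2 = 2 ^ n * Nat.card (linSpace fun x => dotp b (F x)) := by
  rw [hq.walsh_sq_eq]
  rcases sum_linSpace_eq_zero_or (fun x => dotp b (F x))
    (AddMonoidHom.mk' (dotp c) (dotp_add_right c)) with h | h
  · exact Or.inl (by simp only [AddMonoidHom.mk'_apply] at h; rw [h, mul_zero])
  · exact Or.inr (by simp only [AddMonoidHom.mk'_apply] at h; rw [h])

theorem IsQuadratic.exists_walsh_sq_eq {F : Vec n → Vec m} (hq : IsQuadratic F) (b : Vec m) :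
    ∃ c : Vec n, Walsh F b c ^ 2 = 2 ^ n * Nat.card (linSpace fun x => dotp b (F x)) := by
  obtain ⟨c, hc⟩ := exists_sum_linSpace_ne_zero fun x => dotp b (F x)
  refine ⟨c, (hq.walsh_sq_eq_zero_or b c).resolve_left ?_⟩
  rw [hq.walsh_sq_eq]
  exact mul_ne_zero (by positivity) hc

end Walsh

section APN

variable {n : ℕ}

theorem two_mul_card_filter_dotp_eq {b : Vec n} (hb : b ≠ 0) (e : ZMod 2) :
    2 * #{x | dotp b x = e} = 2 ^ n := by
  classical
  let g : Vec n →+ ZMod 2 := AddMonoidHom.mk' (dotp b) (dotp_add_right b)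
  obtain ⟨y, hy⟩ : ∃ y, dotp b y = 1 := by
    by_contra! h
    exact hb (dotProduct_eq_zero_iff.mp fun y => (zmod_two_eq_zero_or_one _).resolve_right (h y))
  have hsurj (e : ZMod 2) : e ∈ Set.range g := by
    rcases zmod_two_eq_zero_or_one e with rfl | rfl
    exacts [⟨0, map_zero g⟩, ⟨y, hy⟩]
  have hfiber (e e' : ZMod 2) : #{x | g x = e} = #{x | g x = e'} :=
    AddMonoidHom.card_fiber_eq_of_mem_range g (hsurj e) (hsurj e')
  have hsplit : #{x | g x = 0} + #{x | g x = 1} = 2 ^ n := by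
    have hne : ∀ u : ZMod 2, ¬u = 0 ↔ u = 1 := by decide
    simpa [hne] using Finset.card_filter_add_card_filter_not (s := univ) (fun x => g x = 0)
  have h₁ := hfiber e 0
  have h₂ := hfiber 1 0
  change 2 * #{x | g x = e} = 2 ^ n
  omega

theorem IsAPN.two_pow_le_two_mul_card_image_Dder {F : Vec n → Vec n} (ha : IsAPN F) {a : Vec n}
    (ha0 : a ≠ 0) : 2 ^ n ≤ 2 * #(univ.image (Dder F a)) := by
  classical
  have h := Finset.card_le_mul_card_image (f := Dder F a) univ 2 fun v _ => by
    have hv := ha a ha0 v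
    rwa [Nat.card_eq_fintype_card, Fintype.card_subtype] at hv
  simpa using h

theorem IsAPN.range_Dder_eq {F : Vec n → Vec n} (ha : IsAPN F) {a b : Vec n} (ha0 : a ≠ 0)
    (hb : b ≠ 0) {e : ZMod 2} (h : ∀ x, dotp b (Dder F a x) = e) :
    Set.range (Dder F a) = {x | dotp b x = e} := by
  classical
  have hsub : univ.image (Dder F a) ⊆ ({x | dotp b x = e} : Finset (Vec n)) := by
    simp only [Finset.subset_iff, Finset.mem_image, Finset.mem_filter, Finset.mem_univ, true_and]
    rintro _ ⟨x, rfl⟩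
    exact h x
  have heq := Finset.eq_of_subset_of_card_le hsub (by
    have := two_mul_card_filter_dotp_eq hb e
    have := ha.two_pow_le_two_mul_card_image_Dder ha0
    omega)
  ext v
  simpa using Finset.ext_iff.mp heq v

theorem mem_Vset_iff {F : Vec n → Vec n} {a b : Vec n} :
    a ∈ Vset F b ↔ a = 0 ∨ ∃ e, Set.range (Dder F a) = {x | dotp b x = e} := by
  simp only [Vset, Tset, TsetBar, Hyp, HypBar, Set.mem_union, Set.mem_ofPred_eq,
    Set.mem_singleton_iff]
  constructor
  · rintro ((h | h) | h)
    exacts [Or.inr ⟨0, h⟩, Or.inl h, Or.inr ⟨1, h⟩]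
  · rintro (h | ⟨e, h⟩)
    · exact Or.inl (Or.inr h)
    · rcases zmod_two_eq_zero_or_one e with rfl | rfl
      exacts [Or.inl (Or.inl h), Or.inr h]

theorem mem_linSpace_iff {F : Vec n → Vec n} {a b : Vec n} :
    a ∈ linSpace (fun x => dotp b (F x)) ↔ ∀ x, dotp b (Dder F a x) = dotp b (Dder F a 0) := by
  refine forall_congr' fun x => ?_
  simp only [polar, Dder, dotp_add_right, zero_add]
  grind

theorem coe_linSpace_eq_Vset {F : Vec n → Vec n} (ha : IsAPN F) {b : Vec n} (hb : b ≠ 0) :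
    (linSpace (fun x => dotp b (F x)) : Set (Vec n)) = Vset F b := by
  ext a
  rw [SetLike.mem_coe, mem_linSpace_iff, mem_Vset_iff]
  constructor
  · intro h
    by_cases ha0 : a = 0
    · exact Or.inl ha0
    · exact Or.inr ⟨_, ha.range_Dder_eq ha0 hb h⟩
  · rintro (rfl | ⟨e, he⟩)
    · exact mem_linSpace_iff.mp (zero_mem _)
    · have hx (x : Vec n) : dotp b (Dder F a x) = e := by
        have : Dder F a x ∈ {v | dotp b v = e} := he ▸ Set.mem_range_self x
        exact this
      exact fun x => (hx x).trans (hx 0).symm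

end APN

theorem stmt_4_general {n : ℕ} (F : Vec n → Vec n) (hq : IsQuadratic F)
    (ha : IsAPN F) (b : Vec n) (hb : b ≠ 0) :
    ∃ S : Submodule (ZMod 2) (Vec n), (S : Set (Vec n)) = Vset F b ∧
      (∀ c : Vec n, (Walsh F b c) ^ 2 = 0 ∨
        (Walsh F b c) ^ 2 = 2 ^ n * (Nat.card (Vset F b) : ℤ)) ∧
      (∀ c : Vec n, (Walsh F b c) ^ 2 = 0 ∨
        (Walsh F b c) ^ 2 = 2 ^ (n + Module.finrank (ZMod 2) S)) ∧
      (∃ c : Vec n, (Walsh F b c) ^ 2 = 2 ^ (n + Module.finrank (ZMod 2) S)) := by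
  set S := linSpace fun x => dotp b (F x)
  have hS : (S : Set (Vec n)) = Vset F b := coe_linSpace_eq_Vset ha hb
  have hVS : Nat.card (Vset F b) = Nat.card S := by rw [← hS, SetLike.coe_sort_coe]
  have hcard : (2 : ℤ) ^ n * Nat.card S = 2 ^ (n + Module.finrank (ZMod 2) S) := by
    rw [Module.natCard_eq_pow_finrank (K := ZMod 2), Nat.card_zmod, pow_add]
    push_cast
    rfl
  refine ⟨S, hS, fun c => ?_, fun c => ?_, ?_⟩
  · rw [hVS]
    exact hq.walsh_sq_eq_zero_or b c
  · rw [← hcard]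
    exact hq.walsh_sq_eq_zero_or b c
  · rw [← hcard]
    exact hq.exists_walsh_sq_eq b

theorem stmt_4 {n : ℕ} (hn : Even n) (F : Vec n → Vec n) (hq : IsQuadratic F)
    (ha : IsAPN F) (b : Vec n) (hb : b ≠ 0) :
    ∃ S : Submodule (ZMod 2) (Vec n), (S : Set (Vec n)) = Vset F b ∧
      (∀ c : Vec n, (Walsh F b c) ^ 2 = 0 ∨
        (Walsh F b c) ^ 2 = 2 ^ n * (Nat.card (Vset F b) : ℤ)) ∧
      (∀ c : Vec n, (Walsh F b c) ^ 2 = 0 ∨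
        (Walsh F b c) ^ 2 = 2 ^ (n + Module.finrank (ZMod 2) S)) ∧
      (∃ c : Vec n, (Walsh F b c) ^ 2 = 2 ^ (n + Module.finrank (ZMod 2) S)) :=
  stmt_4_general F hq ha b hb
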